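/- arXiv:0707.3663 — 4 statements merged into one kernel-verified Lean document; each statement's English description precedes it below -/
import Mathlib

section
/- For real t > 0 and every natural number k, C(t,k)^{-1} · ∑_{m=1}^{∞} ((-1)^m/m)·C(t, m+k) - ∑_{m=1}^{∞} ((-1)^m/m)·C(t,m) = ∑_{m=1}^{k} ((-1)^{m-1}/m)·C(k,m), assuming C(t,k) ≠ 0. -/
/-!
Write `S k = ∑_{m ≥ 1} (-1)^m / m · C(t, m + k)`. The recursion
`C(t, n + 1) = C(t, n)(t - n)/(n + 1)` and the absorption identity
`C(t + 1, n + 1) = (t + 1)/(n + 1) · C(t, n)` give, term by term,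
`S (k + 1) = (t - k)/(k + 1) · S k + 1/(k + 1) · ∑_{m ≥ 0} (-1)^m C(t + 1, m + k + 2)`,
and by Pascal's rule the last series telescopes to `C(t, k + 1)`. Hence `S k / C(t, k) - S 0`
grows by `1/(k + 1)` at each step, so it is the harmonic number `H k`, which is also the
alternating binomial sum on the right. Convergence for `t > 0` comes from
`(n + 1)|C(t, n + 1)| = (n - t)|C(t, n)|` for `n ≥ t`: the sequence `n |C(t, n)|` eventually
decreases, with decrements `t |C(t, n)|`.
-/

open Finset Filter Topology

/-- Generalized binomial coefficient C(t, m) = t(t-1)⋯(t-m+1)/m!. -/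
noncomputable def rchoose (t : ℝ) (m : ℕ) : ℝ :=
  (∏ i ∈ Finset.range m, (t - i)) / m.factorial

lemma hasSum_sub_add_one_of_tendsto_zero {G : Type*} [AddCommGroup G] [TopologicalSpace G]
    [IsTopologicalAddGroup G] [T2Space G] {g : ℕ → G} (hs : Summable fun n => g n - g (n + 1))
    (hg : Tendsto g atTop (𝓝 0)) : HasSum (fun n => g n - g (n + 1)) (g 0) := by
  rw [hs.hasSum_iff_tendsto_nat]
  simp_rw [sum_range_sub']
  simpa using tendsto_const_nhds.sub hg

lemma sum_range_neg_one_pow_mul_choose_succ (n : ℕ) :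
    ∑ i ∈ range (n + 1), (-1 : ℝ) ^ i * (n + 1).choose (i + 1) = 1 := by
  have h : ∑ i ∈ range (n + 2), (-1 : ℝ) ^ i * (n + 1).choose i = 0 := by
    exact_mod_cast Int.alternating_sum_range_choose_of_ne n.succ_ne_zero
  simp only [sum_range_succ' _ (n + 1), pow_succ, Nat.choose_zero_right] at h
  simp only [mul_neg_one, neg_mul, sum_neg_distrib, pow_zero, Nat.cast_one, one_mul] at h
  linarith

lemma sum_range_neg_one_pow_div_mul_choose_succ (n : ℕ) :
    ∑ i ∈ range n, (-1 : ℝ) ^ i / (i + 1) * n.choose (i + 1) = harmonic n := by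
  induction n with
  | zero => simp
  | succ n ih =>
    have absorb : ∀ i ∈ range (n + 1),
        (-1 : ℝ) ^ i / (i + 1) * n.choose i = (-1) ^ i * (n + 1).choose (i + 1) / (n + 1) := by
      intro i _
      have h : ((n + 1 : ℕ) : ℝ) * n.choose i = (n + 1).choose (i + 1) * (i + 1 : ℕ) := by
        exact_mod_cast Nat.add_one_mul_choose_eq n i
      push_cast at h
      field_simp
      linarith
    calc ∑ i ∈ range (n + 1), (-1 : ℝ) ^ i / (i + 1) * (n + 1).choose (i + 1)
        = ∑ i ∈ range (n + 1), (-1 : ℝ) ^ i / (i + 1) * n.choose (i + 1)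
          + ∑ i ∈ range (n + 1), (-1 : ℝ) ^ i / (i + 1) * n.choose i := by
          rw [← sum_add_distrib]
          refine sum_congr rfl fun i _ => ?_
          rw [Nat.choose_succ_succ']
          push_cast
          ring
      _ = harmonic n
          + (∑ i ∈ range (n + 1), (-1 : ℝ) ^ i * (n + 1).choose (i + 1)) / (n + 1) := by
          rw [sum_range_succ, Nat.choose_succ_self, sum_congr rfl absorb, ← sum_div, ih]
          simp
      _ = harmonic (n + 1) := by
          rw [sum_range_neg_one_pow_mul_choose_succ, harmonic_succ]
          push_cast
          ring

lemma sum_Icc_neg_one_pow_div_mul_choose (n : ℕ) :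
    ∑ m ∈ Icc 1 n, (-1 : ℝ) ^ (m - 1) / m * n.choose m = harmonic n := by
  rw [← Ico_add_one_right_eq_Icc, sum_Ico_eq_sum_range, Nat.add_sub_cancel,
    ← sum_range_neg_one_pow_div_mul_choose_succ]
  refine sum_congr rfl fun i _ => ?_
  rw [Nat.add_sub_cancel_left, add_comm 1 i]
  push_cast
  rfl

section Rchoose

variable {t : ℝ}

lemma rchoose_zero (t : ℝ) : rchoose t 0 = 1 := by simp [rchoose]

lemma rchoose_succ (t : ℝ) (n : ℕ) : rchoose t (n + 1) = rchoose t n * (t - n) / (n + 1) := by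
  unfold rchoose
  rw [prod_range_succ, Nat.factorial_succ]
  push_cast
  field_simp

lemma rchoose_add_one_succ (t : ℝ) (n : ℕ) :
    rchoose (t + 1) (n + 1) = (t + 1) / (n + 1) * rchoose t n := by
  unfold rchoose
  rw [prod_range_succ', Nat.factorial_succ]
  push_cast
  field_simp
  simp only [add_sub_add_right_eq_sub, sub_zero]
  ring

lemma rchoose_add_one_succ_eq_add (t : ℝ) (n : ℕ) :
    rchoose (t + 1) (n + 1) = rchoose t n + rchoose t (n + 1) := by
  rw [rchoose_add_one_succ, rchoose_succ]
  field_simp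
  ring

lemma succ_mul_abs_rchoose_succ {n : ℕ} (hn : t ≤ n) :
    (n + 1) * |rchoose t (n + 1)| = (n - t) * |rchoose t n| := by
  rw [rchoose_succ, abs_div, abs_mul, abs_sub_comm, abs_of_nonneg (sub_nonneg.2 hn),
    abs_of_pos (by positivity : (0 : ℝ) < n + 1)]
  field_simp

lemma summable_abs_rchoose (ht : 0 < t) : Summable fun n => |rchoose t n| := by
  obtain ⟨N, hN⟩ := exists_nat_ge t
  rw [← summable_nat_add_iff N]
  set u : ℕ → ℝ := fun i => ((i + N : ℕ) : ℝ) * |rchoose t (i + N)|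
  have decrement : ∀ i, t * |rchoose t (i + N)| = u i - u (i + 1) := by
    intro i
    have hle : t ≤ ((i + N : ℕ) : ℝ) := hN.trans (by exact_mod_cast N.le_add_left i)
    have h := succ_mul_abs_rchoose_succ hle
    simp only [u, show i + 1 + N = i + N + 1 by omega]
    push_cast at h ⊢
    linarith
  refine summable_of_sum_range_le (c := u 0 / t) (fun _ => abs_nonneg _) fun M => ?_
  have htel : t * ∑ i ∈ range M, |rchoose t (i + N)| = u 0 - u M := by
    rw [mul_sum, sum_congr rfl fun i _ => decrement i, sum_range_sub']
  rw [le_div_iff₀ ht, mul_comm]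
  linarith [show 0 ≤ u M by positivity]

lemma tendsto_rchoose_atTop (ht : 0 < t) : Tendsto (rchoose t) atTop (𝓝 0) :=
  tendsto_zero_iff_abs_tendsto_zero _ |>.2 (summable_abs_rchoose ht).tendsto_atTop_zero

lemma summable_mul_rchoose_add (ht : 0 < t) {c : ℕ → ℝ} (hc : ∀ m, |c m| ≤ 1) (j : ℕ) :
    Summable fun m => c m * rchoose t (m + j) :=
  .of_norm_bounded ((summable_nat_add_iff j).2 (summable_abs_rchoose ht)) fun m => by
    rw [Real.norm_eq_abs, abs_mul]
    exact mul_le_of_le_one_left (abs_nonneg _) (hc m)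

lemma tsum_neg_one_pow_mul_rchoose_add_one (ht : 0 < t) (n : ℕ) :
    ∑' m : ℕ, (-1 : ℝ) ^ m * rchoose (t + 1) (m + n + 1) = rchoose t n := by
  set g : ℕ → ℝ := fun m => (-1) ^ m * rchoose t (m + n)
  have htel : ∀ m, (-1 : ℝ) ^ m * rchoose (t + 1) (m + n + 1) = g m - g (m + 1) := by
    intro m
    simp only [g, rchoose_add_one_succ_eq_add, pow_succ, show m + 1 + n = m + n + 1 by omega]
    ring
  have hs : Summable fun m => g m - g (m + 1) := by
    simpa only [← htel, add_assoc] using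
      summable_mul_rchoose_add (by linarith) (fun m => by simp) (n + 1)
  have hg : Tendsto g atTop (𝓝 0) := by
    rw [tendsto_zero_iff_norm_tendsto_zero]
    simpa [g] using ((tendsto_rchoose_atTop ht).comp (tendsto_add_atTop_nat n)).norm
  simpa [tsum_congr htel, g] using (hasSum_sub_add_one_of_tendsto_zero hs hg).tsum_eq

end Rchoose

section ShiftedBinomSeries

variable {t : ℝ}

noncomputable def shiftedBinomSeries (t : ℝ) (k : ℕ) : ℝ :=
  ∑' m : ℕ, ((-1 : ℝ) ^ (m + 1) / (m + 1)) * rchoose t ((m + 1) + k)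

lemma summable_shiftedBinomSeries (ht : 0 < t) (k : ℕ) :
    Summable fun m : ℕ => ((-1 : ℝ) ^ (m + 1) / (m + 1)) * rchoose t ((m + 1) + k) := by
  have hc : ∀ m : ℕ, |(-1 : ℝ) ^ (m + 1) / (m + 1)| ≤ 1 := fun m => by
    rw [abs_div, abs_pow, abs_neg, abs_one, one_pow, abs_of_pos (by positivity)]
    exact div_le_one_of_le₀ (by linarith [m.cast_nonneg (α := ℝ)]) (by positivity)
  simpa only [add_assoc] using summable_mul_rchoose_add ht hc (1 + k)

lemma shiftedBinomSeries_succ (ht : 0 < t) (k : ℕ) :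
    shiftedBinomSeries t (k + 1)
      = (t - k) / (k + 1) * shiftedBinomSeries t k + rchoose t (k + 1) / (k + 1) := by
  have hterm : ∀ m : ℕ, ((-1 : ℝ) ^ (m + 1) / (m + 1)) * rchoose t ((m + 1) + (k + 1))
      = (t - k) / (k + 1) * (((-1 : ℝ) ^ (m + 1) / (m + 1)) * rchoose t ((m + 1) + k))
        + 1 / (k + 1) * ((-1 : ℝ) ^ m * rchoose (t + 1) (m + (k + 1) + 1)) := by
    intro m
    rw [show m + 1 + (k + 1) = m + k + 1 + 1 by omega,
      show m + (k + 1) + 1 = m + k + 1 + 1 by omega, show m + 1 + k = m + k + 1 by omega,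
      rchoose_succ, rchoose_add_one_succ, pow_succ]
    push_cast
    field_simp
    ring
  have halt : Summable fun m : ℕ => (-1 : ℝ) ^ m * rchoose (t + 1) (m + (k + 1) + 1) := by
    simpa only [add_assoc] using summable_mul_rchoose_add (by linarith) (fun m => by simp) (k + 2)
  rw [shiftedBinomSeries, tsum_congr hterm,
    ((summable_shiftedBinomSeries ht k).mul_left _).tsum_add (halt.mul_left _), tsum_mul_left,
    tsum_mul_left, tsum_neg_one_pow_mul_rchoose_add_one ht, shiftedBinomSeries]
  ring

lemma shiftedBinomSeries_eq (ht : 0 < t) (k : ℕ) :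
    shiftedBinomSeries t k = rchoose t k * (shiftedBinomSeries t 0 + harmonic k) := by
  induction k with
  | zero => simp [rchoose_zero]
  | succ k ih =>
    rw [shiftedBinomSeries_succ ht, ih, rchoose_succ, harmonic_succ]
    push_cast
    field_simp
    ring

end ShiftedBinomSeries

theorem binomial_sum_identity (t : ℝ) (ht : 0 < t) (k : ℕ) (hk : rchoose t k ≠ 0) :
    (rchoose t k)⁻¹ * ∑' m : ℕ, ((-1:ℝ) ^ (m + 1) / (m + 1)) * rchoose t ((m + 1) + k)
      - ∑' m : ℕ, ((-1:ℝ) ^ (m + 1) / (m + 1)) * rchoose t (m + 1)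
      = ∑ m ∈ Finset.Icc 1 k, ((-1:ℝ) ^ (m - 1) / m) * (Nat.choose k m) := by
  have h := shiftedBinomSeries_eq ht k
  rw [shiftedBinomSeries] at h
  rw [h, inv_mul_cancel_left₀ hk, sum_Icc_neg_one_pow_div_mul_choose]
  simp [shiftedBinomSeries]
end

section
/- For real t and natural numbers k, m with t not an integer in [0, m+k], the identity C(t,k+1)^{-1}·C(t, m+k+1) - C(t,k)^{-1}·C(t, m+k) = -(m/(k+1))·C(t,k+1)^{-1}·C(t+1, m+k+1) holds. -/
theorem binomial_difference_identity (t : ℝ) (k m : ℕ)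
    (ht : ∀ i : ℕ, i ≤ m + k → t ≠ i) :
    (rchoose t (k + 1))⁻¹ * rchoose t (m + k + 1)
      - (rchoose t k)⁻¹ * rchoose t (m + k)
      = -((m : ℝ) / (k + 1)) * (rchoose t (k + 1))⁻¹ * rchoose (t + 1) (m + k + 1) := by
  have hP : ∀ n : ℕ, n ≤ m + k + 1 → (∏ i ∈ Finset.range n, (t - i)) ≠ 0 := by
    intro n hn
    apply Finset.prod_ne_zero_iff.mpr
    intro i hi
    have hi' : i ≤ m + k := by
      have := Finset.mem_range.mp hi; omega
    exact sub_ne_zero.mpr (ht i hi')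
  have hPk : (∏ i ∈ Finset.range k, (t - i)) ≠ 0 := hP k (by omega)
  have hPmk : (∏ i ∈ Finset.range (m + k), (t - i)) ≠ 0 := hP (m + k) (by omega)
  have h1 : ∏ i ∈ Finset.range (k + 1), (t - i)
      = (∏ i ∈ Finset.range k, (t - i)) * (t - k) := Finset.prod_range_succ _ _
  have h2 : ∏ i ∈ Finset.range (m + k + 1), (t - i)
      = (∏ i ∈ Finset.range (m + k), (t - i)) * (t - (m + k : ℕ)) :=
    Finset.prod_range_succ _ _
  have h3 : ∏ i ∈ Finset.range (m + k + 1), (t + 1 - i)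
      = (∏ i ∈ Finset.range (m + k), (t - i)) * (t + 1) := by
    rw [Finset.prod_range_succ']
    congr 1
    · apply Finset.prod_congr rfl
      intro i _
      push_cast
      ring
    · simp
  have hfk : ((k + 1).factorial : ℝ) = (k + 1) * k.factorial := by
    rw [Nat.factorial_succ]; push_cast; ring
  have hfmk : ((m + k + 1).factorial : ℝ) = (m + k + 1) * (m + k).factorial := by
    rw [Nat.factorial_succ]; push_cast; ring
  have hfk0 : (k.factorial : ℝ) ≠ 0 := Nat.cast_ne_zero.mpr k.factorial_ne_zero
  have hfmk0 : ((m + k).factorial : ℝ) ≠ 0 := Nat.cast_ne_zero.mpr (m + k).factorial_ne_zero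
  have htk : t - k ≠ 0 := sub_ne_zero.mpr (ht k (by omega))
  have hk1 : ((k : ℝ) + 1) ≠ 0 := by positivity
  have hmk1 : ((m : ℝ) + k + 1) ≠ 0 := by positivity
  simp only [rchoose, h1, h2, h3, hfk, hfmk]
  push_cast
  field_simp
  ring
end

section
/- Let f(t) = 2^{-t}·ln Γ(t). Then ∫₀^∞ f(t) dt = 2·∫₀¹ f(t) dt - (γ + ln ln 2)/ln 2. -/
/-!
Write `I(a) = ∫₀^∞ e^{-at} log Γ(t) dt` for `a > 0`. Split `I(a)` at `1` and shift the tail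
by one: since `log Γ(t + 1) = log t + log Γ(t)`, the tail is
`e^{-a} (I(a) + ∫₀^∞ e^{-at} log t dt)`, and after rescaling `t ↦ t / a` the last integral is
`(Γ'(1) - log a) / a = -(γ + log a) / a`. Hence
`(1 - e^{-a}) I(a) = ∫₀¹ e^{-at} log Γ(t) dt - e^{-a} (γ + log a) / a`; take `a = log 2`.
Integrability at infinity comes from `log Γ(t) ≤ (t - 1) log t`, a consequence of log-convexity.
-/

open Real MeasureTheory Set

theorem MeasureTheory.setIntegral_Ioi_comp_add_right {E : Type*} [NormedAddCommGroup E]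
    [NormedSpace ℝ E] (g : ℝ → E) (c d : ℝ) :
    ∫ t in Ioi c, g (t + d) = ∫ t in Ioi (c + d), g t := by
  have h := (measurePreserving_add_right volume d).setIntegral_preimage_emb
    (measurableEmbedding_addRight d) g (Ioi (c + d))
  rwa [preimage_add_const_Ioi, add_sub_cancel_right] at h

namespace Real

theorem integral_exp_neg_mul_log_eq_neg_eulerMascheroniConstant :
    ∫ t in Ioi (0 : ℝ), exp (-t) * log t = -eulerMascheroniConstant := by
  have hGamma : HasDerivAt Complex.Gamma
      (∫ t : ℝ in Ioi 0, (t : ℂ) ^ ((1 : ℂ) - 1) * (log t * exp (-t))) 1 := by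
    refine (Complex.hasDerivAt_GammaIntegral (by simp)).congr_of_eventuallyEq ?_
    filter_upwards [(Complex.continuous_re.isOpen_preimage _ isOpen_Ioi).mem_nhds
      (by simp : (1 : ℂ) ∈ Complex.re ⁻¹' Ioi 0)] with s hs
    exact Complex.Gamma_eq_integral hs
  have h := hGamma.unique Complex.hasDerivAt_Gamma_one
  simp only [sub_self, Complex.cpow_zero, one_mul, mul_comm (log _ : ℂ), ← Complex.ofReal_mul,
    integral_complex_ofReal] at h
  exact_mod_cast h

theorem log_Gamma_add_one {t : ℝ} (ht : 0 < t) :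
    log (Gamma (t + 1)) = log t + log (Gamma t) := by
  rw [Gamma_add_one ht.ne', log_mul ht.ne' (Gamma_pos_of_pos ht).ne']

theorem log_Gamma_le_mul_log {t : ℝ} (ht : 1 ≤ t) : log (Gamma t) ≤ (t - 1) * log t := by
  rcases ht.eq_or_lt with rfl | ht
  · simp
  -- the slope of `log ∘ Gamma` on `[1, t]` is at most its slope `log t` on `[t, t + 1]`
  have hslope := convexOn_log_Gamma.slope_mono_adjacent (y := t) (by simp : (1 : ℝ) ∈ Ioi 0)
    (by simp; linarith : t + 1 ∈ Ioi 0) ht (lt_add_one t)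
  simp only [Function.comp_apply, Gamma_one, log_one, sub_zero,
    log_Gamma_add_one (by linarith : 0 < t), add_sub_cancel_left, add_sub_cancel_right,
    div_one] at hslope
  rwa [div_le_iff₀ (by linarith), mul_comm] at hslope

theorem log_Gamma_nonneg {t : ℝ} (ht : 2 ≤ t) : 0 ≤ log (Gamma t) :=
  log_nonneg (Gamma_two ▸ Gamma_strictMonoOn_Ici.monotoneOn self_mem_Ici ht ht)

theorem continuousOn_log_Gamma : ContinuousOn (fun t => log (Gamma t)) (Ioi 0) :=
  differentiableOn_Gamma_Ioi.continuousOn.log fun _ ht => (Gamma_pos_of_pos ht).ne'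

section

variable {a : ℝ}

theorem integrableOn_Ioi_exp_neg_mul_mul_of_abs_le_sq (ha : 0 < a) {g : ℝ → ℝ}
    (hg : ContinuousOn g (Ioi 1)) (hle : ∀ t, 1 < t → |g t| ≤ t ^ 2) :
    IntegrableOn (fun t => exp (-(a * t)) * g t) (Ioi 1) := by
  have hdom : IntegrableOn (fun t : ℝ => t ^ (2 : ℝ) * exp (-a * t ^ (1 : ℝ))) (Ioi 1) :=
    (integrableOn_rpow_mul_exp_neg_mul_rpow (by norm_num) one_pos ha).mono_set
      (Ioi_subset_Ioi zero_le_one)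
  refine hdom.mono' (((by fun_prop : Continuous fun t => exp (-(a * t))).continuousOn.mul
    hg).aestronglyMeasurable measurableSet_Ioi) ?_
  filter_upwards [ae_restrict_mem measurableSet_Ioi] with t ht
  rw [norm_mul, norm_of_nonneg (exp_pos _).le, norm_eq_abs, rpow_one, rpow_two, mul_comm, neg_mul]
  exact mul_le_mul_of_nonneg_right (hle t ht) (exp_pos _).le

theorem integrableOn_exp_neg_mul_log (ha : 0 < a) :
    IntegrableOn (fun t => exp (-(a * t)) * log t) (Ioi 0) := by
  rw [← Ioc_union_Ioi_eq_Ioi zero_le_one]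
  refine .union ?_ (integrableOn_Ioi_exp_neg_mul_mul_of_abs_le_sq ha ?_ fun t ht => ?_)
  · have hlog : IntegrableOn log (Icc 0 1) := by
      rw [integrableOn_Icc_iff_integrableOn_Ioc,
        ← intervalIntegrable_iff_integrableOn_Ioc_of_le zero_le_one]
      exact intervalIntegral.intervalIntegrable_log'
    exact (IntegrableOn.continuousOn_mul (by fun_prop) hlog isCompact_Icc).mono_set
      Ioc_subset_Icc_self
  · exact continuousOn_log.mono fun t ht => (zero_lt_one.trans ht).ne'
  · rw [abs_of_nonneg (log_nonneg ht.le)]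
    nlinarith [log_le_sub_one_of_pos (zero_lt_one.trans ht)]

theorem integral_exp_neg_mul_log (ha : 0 < a) :
    ∫ t in Ioi 0, exp (-(a * t)) * log t = -(eulerMascheroniConstant + log a) / a := by
  have hexp : IntegrableOn (fun t => exp (-t)) (Ioi 0) := by
    simpa using exp_neg_integrableOn_Ioi 0 one_pos
  have hlog : IntegrableOn (fun t => exp (-t) * log t) (Ioi 0) := by
    simpa using integrableOn_exp_neg_mul_log one_pos
  set g := fun u => exp (-u) * log u - log a * exp (-u)
  have hscale : ∀ t ∈ Ioi (0 : ℝ), exp (-(a * t)) * log t = g (a * t) := fun t ht => by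
    simp only [g, log_mul ha.ne' (ne_of_gt ht)]
    ring
  rw [setIntegral_congr_fun measurableSet_Ioi hscale, integral_comp_mul_left_Ioi g 0 ha, mul_zero,
    smul_eq_mul, integral_sub hlog (hexp.const_mul _), integral_const_mul,
    integral_exp_neg_mul_log_eq_neg_eulerMascheroniConstant, integral_exp_neg_Ioi_zero]
  field_simp
  ring

theorem integrableOn_exp_neg_mul_log_Gamma_add_one (ha : 0 < a) :
    IntegrableOn (fun t => exp (-(a * t)) * log (Gamma (t + 1))) (Ioi 0) := by
  have hcont : ContinuousOn (fun t => log (Gamma (t + 1))) (Ioi (-1)) :=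
    continuousOn_log_Gamma.comp (by fun_prop) fun t ht => by simp at ht ⊢; linarith
  rw [← Ioc_union_Ioi_eq_Ioi zero_le_one]
  refine .union ?_ (integrableOn_Ioi_exp_neg_mul_mul_of_abs_le_sq ha
    (hcont.mono (Ioi_subset_Ioi (by norm_num))) fun t ht => ?_)
  · refine (ContinuousOn.integrableOn_Icc ?_).mono_set Ioc_subset_Icc_self
    exact (by fun_prop : Continuous fun t => exp (-(a * t))).continuousOn.mul
      (hcont.mono fun t ht => by simp at ht ⊢; linarith [ht.1])
  · rw [abs_of_nonneg (log_Gamma_nonneg (by linarith))]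
    have hGamma := log_Gamma_le_mul_log (by linarith : 1 ≤ t + 1)
    have hlog := log_le_sub_one_of_pos (by linarith : 0 < t + 1)
    rw [add_sub_cancel_right] at hGamma hlog
    nlinarith

theorem integrableOn_exp_neg_mul_log_Gamma (ha : 0 < a) :
    IntegrableOn (fun t => exp (-(a * t)) * log (Gamma t)) (Ioi 0) := by
  refine ((integrableOn_exp_neg_mul_log_Gamma_add_one ha).sub
    (integrableOn_exp_neg_mul_log ha)).congr_fun (fun t ht => ?_) measurableSet_Ioi
  simp only [Pi.sub_apply, log_Gamma_add_one ht]
  ring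

theorem integral_exp_neg_mul_log_Gamma (ha : 0 < a) :
    (1 - exp (-a)) * ∫ t in Ioi 0, exp (-(a * t)) * log (Gamma t)
      = (∫ t in 0..1, exp (-(a * t)) * log (Gamma t))
        - exp (-a) * ((eulerMascheroniConstant + log a) / a) := by
  set f := fun t => exp (-(a * t)) * log (Gamma t)
  have hf : IntegrableOn f (Ioi 0) := integrableOn_exp_neg_mul_log_Gamma ha
  have hsplit : ∫ t in Ioi 0, f t = (∫ t in 0..1, f t) + ∫ t in Ioi 1, f t := by
    rw [intervalIntegral.integral_of_le zero_le_one, ← setIntegral_union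
      (Ioc_disjoint_Ioi le_rfl) measurableSet_Ioi (hf.mono_set Ioc_subset_Ioi_self)
      (hf.mono_set (Ioi_subset_Ioi zero_le_one)), Ioc_union_Ioi_eq_Ioi zero_le_one]
  have hshift : ∫ t in Ioi 1, f t
      = exp (-a) * ((∫ t in Ioi 0, f t) + ∫ t in Ioi 0, exp (-(a * t)) * log t) := by
    rw [← zero_add (1 : ℝ), ← setIntegral_Ioi_comp_add_right, ← integral_add hf
      (integrableOn_exp_neg_mul_log ha), ← integral_const_mul]
    refine setIntegral_congr_fun measurableSet_Ioi fun t ht => ?_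
    simp only [f, log_Gamma_add_one ht, mul_add, neg_add, exp_add, mul_one]
    ring
  rw [integral_exp_neg_mul_log ha] at hshift
  linear_combination hsplit + hshift

end

end Real

theorem espinosa_identity_one :
    ∫ t in Set.Ioi (0:ℝ), (2:ℝ) ^ (-t) * Real.log (Real.Gamma t)
      = 2 * (∫ t in (0:ℝ)..1, (2:ℝ) ^ (-t) * Real.log (Real.Gamma t))
        - (Real.eulerMascheroniConstant + Real.log (Real.log 2)) / Real.log 2 := by
  have hpow : ∀ t : ℝ, (2 : ℝ) ^ (-t) = exp (-(log 2 * t)) := fun t => by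
    rw [rpow_def_of_pos two_pos, mul_neg]
  have h := integral_exp_neg_mul_log_Gamma (log_pos one_lt_two)
  rw [exp_neg, exp_log two_pos] at h
  simp_rw [hpow]
  linear_combination 2 * h
end

section
/- Let f(t) = 2^{-t}·ln Γ(t). Then ∫₀^∞ t·f(t) dt = 2·∫₀¹ (t+1)·f(t) dt - ((γ + ln ln 2)(1 + 2 ln 2) - 1)/(ln 2)². -/
/-!
Write `F t = 2 ^ (-t) * log Γ(t)`. Since `log Γ(t + 1) = log Γ(t) + log t`, we have
`F (t + 1) = (F t + 2 ^ (-t) * log t) / 2`. Splitting `∫₀^∞` at `1` and shifting the tail by one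
turns `∫₀^∞ F` and `∫₀^∞ t F` into two linear equations, whose remaining terms are the Laplace
transforms `∫₀^∞ tⁿ e^{-ct} log t = n! (Hₙ - γ - log c) / c^(n+1)` (`n = 0, 1`, `c = log 2`).
These come by scaling from `Γ'(n + 1) = ∫₀^∞ tⁿ e^{-t} log t = n! (Hₙ - γ)`.
All integrals converge because `|log Γ(t)| = O(t^(-1/2) + t²)` on `(0, ∞)`.
-/

open Real MeasureTheory Set
open scoped Nat

theorem Real.hasDerivAt_Gamma_integral_log {s : ℝ} (hs : 0 < s) :
    HasDerivAt Gamma (∫ t in Ioi (0:ℝ), t ^ (s - 1) * (log t * exp (-t))) s := by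
  have hΓ : HasDerivAt Complex.Gamma
      (∫ t in Ioi (0:ℝ), (t : ℂ) ^ ((s : ℂ) - 1) * (log t * exp (-t))) s := by
    refine (Complex.hasDerivAt_GammaIntegral (by simpa using hs)).congr_of_eventuallyEq ?_
    filter_upwards [(isOpen_lt continuous_const Complex.continuous_re).mem_nhds
      (show (0:ℝ) < (s : ℂ).re by simpa using hs)] with z hz
    exact Complex.Gamma_eq_integral hz
  have hint : (∫ t in Ioi (0:ℝ), (t : ℂ) ^ ((s : ℂ) - 1) * (log t * exp (-t)))
      = ((∫ t in Ioi (0:ℝ), t ^ (s - 1) * (log t * exp (-t)) : ℝ) : ℂ) := by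
    refine Eq.trans ?_ integral_ofReal
    refine setIntegral_congr_fun measurableSet_Ioi fun t ht => ?_
    simp [Complex.ofReal_cpow (le_of_lt ht), Complex.ofReal_exp]
  rw [hint] at hΓ
  simpa [Complex.Gamma_ofReal] using hΓ.real_of_complex

lemma integrableOn_rpow_mul_exp_neg_mul {s c : ℝ} (hs : -1 < s) (hc : 0 < c) :
    IntegrableOn (fun t : ℝ => t ^ s * exp (-(c * t))) (Ioi 0) := by
  simpa using integrableOn_rpow_mul_exp_neg_mul_rpow hs one_pos hc

lemma integrableOn_pow_mul_exp_neg_mul_mul_of_abs_le {g : ℝ → ℝ} {c C : ℝ} (hc : 0 < c)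
    (m n : ℕ) (hg : ContinuousOn g (Ioi 0))
    (hbound : ∀ t ∈ Ioi (0:ℝ), |g t| ≤ C * (t ^ (-(1/2) : ℝ) + t ^ m + 1)) :
    IntegrableOn (fun t => t ^ n * (exp (-(c * t)) * g t)) (Ioi 0) := by
  have hn : (-1 : ℝ) < n := neg_one_lt_zero.trans_le n.cast_nonneg
  have hdom : IntegrableOn (fun t => C * (t ^ ((n:ℝ) - 1/2) * exp (-(c * t))
      + t ^ ((n + m : ℕ) : ℝ) * exp (-(c * t)) + t ^ (n : ℝ) * exp (-(c * t)))) (Ioi 0) :=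
    (((integrableOn_rpow_mul_exp_neg_mul (by linarith) hc).add
      (integrableOn_rpow_mul_exp_neg_mul (hn.trans_le (by simp)) hc)).add
      (integrableOn_rpow_mul_exp_neg_mul hn hc)).const_mul C
  have hcont : ContinuousOn (fun t => t ^ n * (exp (-(c * t)) * g t)) (Ioi 0) := by
    fun_prop
  refine hdom.mono' (hcont.aestronglyMeasurable measurableSet_Ioi) ?_
  filter_upwards [ae_restrict_mem measurableSet_Ioi] with t ht
  have ht0 : (0:ℝ) < t := ht
  calc ‖t ^ n * (exp (-(c * t)) * g t)‖ = t ^ n * exp (-(c * t)) * |g t| := by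
        rw [Real.norm_eq_abs, abs_mul, abs_mul, abs_of_pos (pow_pos ht0 n), abs_of_pos (exp_pos _),
          mul_assoc]
    _ ≤ t ^ n * exp (-(c * t)) * (C * (t ^ (-(1/2) : ℝ) + t ^ m + 1)) := by
        gcongr; exact hbound t ht
    _ = _ := by
        rw [sub_eq_add_neg, rpow_add ht0]
        simp only [rpow_natCast, pow_add]
        ring

lemma abs_log_le_two_mul_rpow_neg_half_add {t : ℝ} (ht : 0 < t) :
    |log t| ≤ 2 * t ^ (-(1/2) : ℝ) + t := by
  have hsqrt : 0 < t ^ (-(1/2) : ℝ) := rpow_pos_of_pos ht _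
  rcases le_total 1 t with h | h
  · rw [abs_of_nonneg (log_nonneg h)]
    linarith [log_le_sub_one_of_pos ht]
  · rw [abs_of_nonpos (log_nonpos ht.le h)]
    have := log_le_sub_one_of_pos hsqrt
    rw [log_rpow ht] at this
    linarith

lemma Real.one_le_Gamma {x : ℝ} (hx : 2 ≤ x) : 1 ≤ Gamma x :=
  Gamma_two ▸ Gamma_strictMonoOn_Ici.monotoneOn (mem_Ici.2 le_rfl) hx hx

lemma Real.Gamma_le_rpow_self {x : ℝ} (hx : 2 ≤ x) : Gamma x ≤ x ^ x := by
  set m := ⌊x⌋₊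
  have hmx : (m : ℝ) ≤ x := Nat.floor_le (by linarith)
  have hxm : x ≤ m + 1 := (Nat.lt_floor_add_one x).le
  calc Gamma x ≤ Gamma (m + 1) :=
        Gamma_strictMonoOn_Ici.monotoneOn hx (mem_Ici.2 (by linarith)) hxm
    _ = m ! := Gamma_nat_eq_factorial m
    _ ≤ (m : ℝ) ^ m := by exact_mod_cast m.factorial_le_pow
    _ ≤ x ^ m := by gcongr
    _ = x ^ (m : ℝ) := (rpow_natCast x m).symm
    _ ≤ x ^ x := rpow_le_rpow_of_exponent_le (by linarith) hmx

lemma Real.log_Gamma_add_one_s18 {t : ℝ} (ht : 0 < t) :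
    log (Gamma (t + 1)) = log t + log (Gamma t) := by
  rw [Gamma_add_one ht.ne', log_mul ht.ne' (Gamma_pos_of_pos ht).ne']

lemma abs_log_Gamma_le {t : ℝ} (ht : 0 < t) :
    |log (Gamma t)| ≤ 5 * (t ^ (-(1/2) : ℝ) + t ^ 2 + 1) := by
  have hrec : log (Gamma t) = log (Gamma (t + 2)) - log t - log (t + 1) := by
    rw [show t + 2 = t + 1 + 1 by ring, log_Gamma_add_one_s18 (by linarith), log_Gamma_add_one_s18 ht]
    ring
  have hΓ₀ : 0 ≤ log (Gamma (t + 2)) := log_nonneg (one_le_Gamma (by linarith))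
  have hΓ₁ : log (Gamma (t + 2)) ≤ (t + 2) * (t + 1) := by
    calc log (Gamma (t + 2)) ≤ log ((t + 2) ^ (t + 2)) :=
          log_le_log (Gamma_pos_of_pos (by linarith)) (Gamma_le_rpow_self (by linarith))
      _ = (t + 2) * log (t + 2) := log_rpow (by linarith) _
      _ ≤ (t + 2) * (t + 1) := by
          gcongr; linarith [log_le_sub_one_of_pos (show 0 < t + 2 by linarith)]
  have hlog₀ : 0 ≤ log (t + 1) := log_nonneg (by linarith)
  have hlog₁ : log (t + 1) ≤ t := by linarith [log_le_sub_one_of_pos (show 0 < t + 1 by linarith)]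
  have hlog := abs_le.1 (abs_log_le_two_mul_rpow_neg_half_add ht)
  have hsqrt : 0 < t ^ (-(1/2) : ℝ) := rpow_pos_of_pos ht _
  rw [hrec, abs_le]
  constructor <;> nlinarith

lemma integrableOn_pow_mul_exp_neg_mul_mul_log (n : ℕ) {c : ℝ} (hc : 0 < c) :
    IntegrableOn (fun t => t ^ n * (exp (-(c * t)) * log t)) (Ioi 0) :=
  integrableOn_pow_mul_exp_neg_mul_mul_of_abs_le (C := 2) hc 1 n
    (continuousOn_log.mono fun _ ht => ht.ne')
    fun t ht => (abs_log_le_two_mul_rpow_neg_half_add ht).trans <| by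
      linarith [rpow_pos_of_pos (mem_Ioi.1 ht) (-(1/2)), mem_Ioi.1 ht, pow_one t]

lemma integrableOn_pow_mul_exp_neg_mul_mul_log_Gamma (n : ℕ) {c : ℝ} (hc : 0 < c) :
    IntegrableOn (fun t => t ^ n * (exp (-(c * t)) * log (Gamma t))) (Ioi 0) :=
  integrableOn_pow_mul_exp_neg_mul_mul_of_abs_le hc 2 n
    (differentiableOn_Gamma_Ioi.continuousOn.log fun _ ht => (Gamma_pos_of_pos ht).ne')
    fun _ ht => abs_log_Gamma_le ht

lemma integral_pow_mul_exp_neg_mul (n : ℕ) {c : ℝ} (hc : 0 < c) :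
    ∫ t in Ioi (0:ℝ), t ^ n * exp (-(c * t)) = n ! / c ^ (n + 1) := by
  have h := integral_rpow_mul_exp_neg_mul_Ioi (a := n + 1) (by positivity) hc
  rw [add_sub_cancel_right, Gamma_nat_eq_factorial, ← Nat.cast_succ, rpow_natCast] at h
  simp_rw [rpow_natCast] at h
  rw [h, Nat.succ_eq_add_one, one_div, inv_pow, div_eq_mul_inv, mul_comm]

theorem integral_pow_mul_exp_neg_mul_mul_log (n : ℕ) {c : ℝ} (hc : 0 < c) :
    ∫ t in Ioi (0:ℝ), t ^ n * (exp (-(c * t)) * log t)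
      = n ! * (harmonic n - eulerMascheroniConstant - log c) / c ^ (n + 1) := by
  have hderiv : ∫ t in Ioi (0:ℝ), t ^ n * (exp (-t) * log t)
      = n ! * (harmonic n - eulerMascheroniConstant) := by
    have h := (hasDerivAt_Gamma_integral_log (s := n + 1) (by positivity)).unique
      (hasDerivAt_Gamma_nat n)
    simp_rw [add_sub_cancel_right, rpow_natCast] at h
    simp_rw [mul_comm (exp _) (log _), h]
    ring
  have hscale := integral_comp_mul_left_Ioi (fun u => u ^ n * (exp (-u) * log u)) 0 hc
  rw [mul_zero, hderiv, smul_eq_mul] at hscale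
  have hexp : IntegrableOn (fun t : ℝ => t ^ n * exp (-(c * t))) (Ioi 0) := by
    simpa only [rpow_natCast] using
      integrableOn_rpow_mul_exp_neg_mul (s := n) (neg_one_lt_zero.trans_le n.cast_nonneg) hc
  have hsplit : ∫ t in Ioi (0:ℝ), (c * t) ^ n * (exp (-(c * t)) * log (c * t))
      = c ^ n * (log c * (∫ t in Ioi (0:ℝ), t ^ n * exp (-(c * t)))
        + ∫ t in Ioi (0:ℝ), t ^ n * (exp (-(c * t)) * log t)) := by
    rw [← integral_const_mul (log c) (fun t => t ^ n * exp (-(c * t))),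
      ← integral_add (hexp.const_mul _) (integrableOn_pow_mul_exp_neg_mul_mul_log n hc),
      ← integral_const_mul]
    refine setIntegral_congr_fun measurableSet_Ioi fun t ht => ?_
    rw [mul_pow, log_mul hc.ne' (ne_of_gt ht)]
    ring
  rw [hsplit, integral_pow_mul_exp_neg_mul n hc] at hscale
  rw [eq_div_iff (by positivity)]
  linear_combination (norm := skip) c * hscale
  field_simp
  ring

lemma integral_Ioi_zero_eq_intervalIntegral_add_integral_comp_add_one {E : Type*}
    [NormedAddCommGroup E] [NormedSpace ℝ E] {f : ℝ → E} (hf : IntegrableOn f (Ioi 0)) :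
    ∫ t in Ioi (0:ℝ), f t = (∫ t in (0:ℝ)..1, f t) + ∫ t in Ioi (0:ℝ), f (t + 1) := by
  have hshift : ∫ t in Ioi (0:ℝ), f (t + 1) = ∫ t in Ioi (1:ℝ), f t := by
    have h := (measurePreserving_add_right volume (1:ℝ)).setIntegral_preimage_emb
      (measurableEmbedding_addRight 1) f (Ioi 1)
    rwa [show (· + (1:ℝ)) ⁻¹' Ioi 1 = Ioi 0 by ext; simp] at h
  rw [hshift, intervalIntegral.integral_of_le zero_le_one, ← setIntegral_union
    (Ioc_disjoint_Ioi le_rfl) measurableSet_Ioi (hf.mono_set Ioc_subset_Ioi_self)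
    (hf.mono_set (Ioi_subset_Ioi zero_le_one)), Ioc_union_Ioi_eq_Ioi zero_le_one]

lemma exp_neg_mul_add_one_mul_log_Gamma_add_one (c : ℝ) {t : ℝ} (ht : 0 < t) :
    exp (-(c * (t + 1))) * log (Gamma (t + 1))
      = exp (-c) * (exp (-(c * t)) * log (Gamma t) + exp (-(c * t)) * log t) := by
  rw [log_Gamma_add_one_s18 ht, show -(c * (t + 1)) = -c + -(c * t) by ring, exp_add]
  ring

lemma integral_exp_neg_mul_mul_log_Gamma {c : ℝ} (hc : 0 < c) :
    ∫ t in Ioi (0:ℝ), exp (-(c * t)) * log (Gamma t)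
      = (∫ t in (0:ℝ)..1, exp (-(c * t)) * log (Gamma t))
        + exp (-c) * ((∫ t in Ioi (0:ℝ), exp (-(c * t)) * log (Gamma t))
          + ∫ t in Ioi (0:ℝ), exp (-(c * t)) * log t) := by
  have hΓ := integrableOn_pow_mul_exp_neg_mul_mul_log_Gamma 0 hc
  have hlog := integrableOn_pow_mul_exp_neg_mul_mul_log 0 hc
  simp only [pow_zero, one_mul] at hΓ hlog
  conv_lhs => rw [integral_Ioi_zero_eq_intervalIntegral_add_integral_comp_add_one hΓ]
  rw [← integral_add hΓ hlog, ← integral_const_mul]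
  congr 1
  exact setIntegral_congr_fun measurableSet_Ioi fun t ht =>
    exp_neg_mul_add_one_mul_log_Gamma_add_one c ht

lemma integral_mul_exp_neg_mul_mul_log_Gamma {c : ℝ} (hc : 0 < c) :
    ∫ t in Ioi (0:ℝ), t * (exp (-(c * t)) * log (Gamma t))
      = (∫ t in (0:ℝ)..1, t * (exp (-(c * t)) * log (Gamma t)))
        + exp (-c) * ((∫ t in Ioi (0:ℝ), t * (exp (-(c * t)) * log (Gamma t)))
          + (∫ t in Ioi (0:ℝ), exp (-(c * t)) * log (Gamma t))
          + (∫ t in Ioi (0:ℝ), t * (exp (-(c * t)) * log t))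
          + ∫ t in Ioi (0:ℝ), exp (-(c * t)) * log t) := by
  have hΓ₀ := integrableOn_pow_mul_exp_neg_mul_mul_log_Gamma 0 hc
  have hΓ₁ := integrableOn_pow_mul_exp_neg_mul_mul_log_Gamma 1 hc
  have hlog₀ := integrableOn_pow_mul_exp_neg_mul_mul_log 0 hc
  have hlog₁ := integrableOn_pow_mul_exp_neg_mul_mul_log 1 hc
  simp only [pow_zero, pow_one, one_mul] at hΓ₀ hΓ₁ hlog₀ hlog₁
  conv_lhs => rw [integral_Ioi_zero_eq_intervalIntegral_add_integral_comp_add_one hΓ₁]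
  congr 1
  have hshift : ∀ t ∈ Ioi (0:ℝ),
      (t + 1) * (exp (-(c * (t + 1))) * log (Gamma (t + 1)))
        = exp (-c) * (t * (exp (-(c * t)) * log (Gamma t)) + exp (-(c * t)) * log (Gamma t)
          + t * (exp (-(c * t)) * log t) + exp (-(c * t)) * log t) := fun t ht => by
    rw [exp_neg_mul_add_one_mul_log_Gamma_add_one c ht]
    ring
  rw [setIntegral_congr_fun measurableSet_Ioi hshift, integral_const_mul,
    integral_add _ hlog₀, integral_add _ hlog₁, integral_add hΓ₁ hΓ₀]
  exacts [hΓ₁.add hΓ₀, (hΓ₁.add hΓ₀).add hlog₁]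

lemma intervalIntegral_add_one_mul_exp_neg_mul_mul_log_Gamma {c : ℝ} (hc : 0 < c) :
    ∫ t in (0:ℝ)..1, (t + 1) * (exp (-(c * t)) * log (Gamma t))
      = (∫ t in (0:ℝ)..1, t * (exp (-(c * t)) * log (Gamma t)))
        + ∫ t in (0:ℝ)..1, exp (-(c * t)) * log (Gamma t) := by
  have hΓ₀ := integrableOn_pow_mul_exp_neg_mul_mul_log_Gamma 0 hc
  have hΓ₁ := integrableOn_pow_mul_exp_neg_mul_mul_log_Gamma 1 hc
  simp only [pow_zero, pow_one, one_mul] at hΓ₀ hΓ₁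
  simp_rw [add_one_mul]
  exact intervalIntegral.integral_add
    ((intervalIntegrable_iff_integrableOn_Ioc_of_le zero_le_one).2
      (hΓ₁.mono_set Ioc_subset_Ioi_self))
    ((intervalIntegrable_iff_integrableOn_Ioc_of_le zero_le_one).2
      (hΓ₀.mono_set Ioc_subset_Ioi_self))

lemma two_rpow_neg_eq_exp (t : ℝ) : (2:ℝ) ^ (-t) = exp (-(log 2 * t)) := by
  rw [rpow_def_of_pos two_pos, mul_neg]

theorem espinosa_identity_two :
    ∫ t in Set.Ioi (0:ℝ), t * ((2:ℝ) ^ (-t) * Real.log (Real.Gamma t))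
      = 2 * (∫ t in (0:ℝ)..1, (t + 1) * ((2:ℝ) ^ (-t) * Real.log (Real.Gamma t)))
        - ((Real.eulerMascheroniConstant + Real.log (Real.log 2)) * (1 + 2 * Real.log 2) - 1)
            / (Real.log 2) ^ 2 := by
  have hc : 0 < log 2 := log_pos one_lt_two
  have hhalf : exp (-log 2) = 1 / 2 := by rw [exp_neg, exp_log two_pos, one_div]
  have hD := integral_pow_mul_exp_neg_mul_mul_log 0 hc
  have hT := integral_pow_mul_exp_neg_mul_mul_log 1 hc
  norm_num [harmonic] at hD hT
  have hK := integral_exp_neg_mul_mul_log_Gamma hc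
  have hI := integral_mul_exp_neg_mul_mul_log_Gamma hc
  rw [hhalf, hD] at hK
  rw [hhalf, hD, hT] at hI
  simp_rw [two_rpow_neg_eq_exp]
  rw [intervalIntegral_add_one_mul_exp_neg_mul_mul_log_Gamma hc]
  have hinv : log 2 * (log 2)⁻¹ = 1 := mul_inv_cancel₀ hc.ne'
  linear_combination 2 * hI + 2 * hK
    + 2 * (eulerMascheroniConstant + log (log 2)) * (log 2)⁻¹ * hinv
end
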